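/- In a distributive inverse semigroup, every ultrafilter is a prime filter. -/

import Mathlib

/-!
Suppose the join `j = a ∨ b` lies in the ultrafilter `F` but `a, b ∉ F`. For `x ∈ {a, b}` the
upward closure of `{x f⁻¹f : f ∈ F}` is a filter containing `x` and, since `x f⁻¹f ≤ j f⁻¹f = f`
for `f ≤ j`, also `F`; by maximality it must contain `0`, so `x f⁻¹f = 0` for some `f ∈ F`.
For `h ∈ F` below both witnesses and below `j`, distributivity gives
`h = j h⁻¹h = a h⁻¹h ∨ b h⁻¹h = 0`, contradicting properness.
-/

namespace InvPaper

/-- An inverse semigroup: a regular semigroup whose idempotents commute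
(equivalently, each element has a unique generalized inverse `sinv`). -/
class InverseSemigroup (S : Type*) extends Semigroup S where
  sinv : S → S
  mul_sinv_mul : ∀ a : S, a * sinv a * a = a
  sinv_mul_sinv : ∀ a : S, sinv a * a * sinv a = sinv a
  idem_comm : ∀ e f : S, e * e = e → f * f = f → e * f = f * e

open InverseSemigroup

variable {S : Type*}

section Basic
variable [InverseSemigroup S]

/-- `e` is an idempotent. -/
def idem (e : S) : Prop := e * e = e

/-- The natural partial order: `a ≤ b` iff `a = b * e` for some idempotent `e`. -/
def nle (a b : S) : Prop := ∃ e : S, idem e ∧ a = b * e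

/-- `s` and `t` are compatible: `s⁻¹t` and `st⁻¹` are idempotents. -/
def compatible (s t : S) : Prop := idem (sinv s * t) ∧ idem (s * sinv t)

/-- `j` is the join (least upper bound) of `a` and `b` w.r.t. the natural partial order. -/
def isJoin (a b j : S) : Prop :=
  nle a j ∧ nle b j ∧ ∀ c : S, nle a c → nle b c → nle j c

/-- `m` is the meet (greatest lower bound) of `a` and `b`. -/
def isMeet (a b m : S) : Prop :=
  nle m a ∧ nle m b ∧ ∀ z : S, nle z a → nle z b → nle z m

/-- `j` is the least upper bound of the set `A`. -/
def isJoinSet (A : Set S) (j : S) : Prop :=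
  (∀ a ∈ A, nle a j) ∧ ∀ c : S, (∀ a ∈ A, nle a c) → nle j c

/-- A filter: a nonempty, downward-directed, upward-closed subset. -/
def IsFilter (F : Set S) : Prop :=
  F.Nonempty ∧ (∀ a ∈ F, ∀ b ∈ F, ∃ c ∈ F, nle c a ∧ nle c b) ∧
    ∀ a ∈ F, ∀ b : S, nle a b → b ∈ F

/-- An order ideal: a downward-closed subset. -/
def IsOrderIdeal (A : Set S) : Prop := ∀ x ∈ A, ∀ y : S, nle y x → y ∈ A

end Basic

/-- An inverse semigroup with a (multiplicative) zero element. -/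
class InverseSemigroupWithZero (S : Type*) extends InverseSemigroup S, Zero S where
  zmul : ∀ a : S, 0 * a = 0
  mulz : ∀ a : S, a * 0 = 0

section WithZero
variable [InverseSemigroupWithZero S]

/-- A proper filter: a filter not containing `0`. -/
def IsProperFilter (F : Set S) : Prop := IsFilter F ∧ (0 : S) ∉ F

/-- An ultrafilter: a maximal proper filter. -/
def IsUltrafilter (F : Set S) : Prop :=
  IsProperFilter F ∧ ∀ G : Set S, IsProperFilter G → F ⊆ G → G = F

/-- A prime filter: a proper filter `F` such that whenever a join `a ∨ b` exists and
lies in `F`, then `a ∈ F` or `b ∈ F`. -/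
def IsPrimeFilter (F : Set S) : Prop :=
  IsProperFilter F ∧ ∀ a b j : S, isJoin a b j → j ∈ F → a ∈ F ∨ b ∈ F

/-- `d(F) = (F⁻¹F)↑`, the upward closure of `{a⁻¹b : a, b ∈ F}`. -/
def dClosure (F : Set S) : Set S :=
  {x | ∃ a ∈ F, ∃ b ∈ F, nle (InverseSemigroup.sinv a * b) x}

/-- `r(F) = (FF⁻¹)↑`, the upward closure of `{ab⁻¹ : a, b ∈ F}`. -/
def rClosure (F : Set S) : Set S :=
  {x | ∃ a ∈ F, ∃ b ∈ F, nle (a * InverseSemigroup.sinv b) x}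

/-- The product of two filters: `F · G = (FG)↑`. -/
def filterMul (F G : Set S) : Set S :=
  {x | ∃ a ∈ F, ∃ b ∈ G, nle (a * b) x}

/-- `A` is ∨-closed: closed under existing joins of finite nonempty compatible subsets. -/
def IsVeeClosed (A : Set S) : Prop :=
  ∀ Y : Finset S, Y.Nonempty → ↑Y ⊆ A → (∀ a ∈ Y, ∀ b ∈ Y, compatible a b) →
    ∀ j : S, isJoinSet (↑Y : Set S) j → j ∈ A

/-- The ∨-closure `A^∨`: all existing joins of finite nonempty compatible subsets of `A`. -/
def veeClosure (A : Set S) : Set S :=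
  {x | ∃ Y : Finset S, Y.Nonempty ∧ ↑Y ⊆ A ∧ (∀ a ∈ Y, ∀ b ∈ Y, compatible a b) ∧
    isJoinSet (↑Y : Set S) x}

/-- A prime order ideal: if every common lower bound of `a` and `b` lies in `P`,
then `a ∈ P` or `b ∈ P`. -/
def IsPrimeOrderIdeal (P : Set S) : Prop :=
  ∀ a b : S, (∀ z : S, nle z a → nle z b → z ∈ P) → a ∈ P ∨ b ∈ P

/-- The set of prime filters containing `s`. -/
def Xset (s : S) : Set (Set S) := {F | IsPrimeFilter F ∧ s ∈ F}

end WithZero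

/-- A distributive inverse semigroup: compatible pairs have joins and
multiplication distributes over these joins. -/
class DistributiveInverseSemigroup (S : Type*) extends InverseSemigroupWithZero S where
  joins_exist : ∀ a b : S, compatible a b → ∃ j : S, isJoin a b j
  mul_distrib_left : ∀ a b j c : S, compatible a b → isJoin a b j →
    isJoin (c * a) (c * b) (c * j)
  mul_distrib_right : ∀ a b j c : S, compatible a b → isJoin a b j →
    isJoin (a * c) (b * c) (j * c)

/-- A distributive inverse semigroup is Boolean if its idempotents form a generalized
Boolean algebra: relative complements of idempotents exist. -/
def IsBoolean (S : Type*) [DistributiveInverseSemigroup S] : Prop :=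
  ∀ e f : S, idem e → idem f → nle e f →
    ∃ g : S, idem g ∧ e * g = 0 ∧ isJoin e g f

/-- A pseudogroup: an inverse semigroup with joins of all nonempty compatible subsets,
over which multiplication distributes. -/
class Pseudogroup (S : Type*) extends InverseSemigroup S where
  joins_exist : ∀ A : Set S, A.Nonempty → (∀ a ∈ A, ∀ b ∈ A, compatible a b) →
    ∃ j : S, isJoinSet A j
  mul_distrib_left : ∀ (A : Set S) (j c : S), isJoinSet A j →
    isJoinSet ((c * ·) '' A) (c * j)
  mul_distrib_right : ∀ (A : Set S) (j c : S), isJoinSet A j →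
    isJoinSet ((· * c) '' A) (j * c)

section InverseSemigroup
variable [InverseSemigroup S]

theorem idem_mul {e f : S} (he : idem e) (hf : idem f) : idem (e * f) := by
  unfold idem at *
  rw [mul_assoc, ← mul_assoc f e f, idem_comm f e hf he, mul_assoc e f f, hf, ← mul_assoc, he]

theorem idem_mul_of_mul_mul_eq {a x : S} (h : a * x * a = a) : idem (a * x) := by
  unfold idem
  rw [← mul_assoc, h]

theorem idem_mul_of_mul_mul_eq' {a x : S} (h : a * x * a = a) : idem (x * a) := by
  unfold idem
  rw [mul_assoc, ← mul_assoc a x a, h]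

theorem idem_sinv_mul_self (a : S) : idem (sinv a * a) :=
  idem_mul_of_mul_mul_eq' (mul_sinv_mul a)

theorem idem_mul_sinv_self (a : S) : idem (a * sinv a) :=
  idem_mul_of_mul_mul_eq (mul_sinv_mul a)

theorem idem_mul_mul_sinv (j : S) {g : S} (hg : idem g) : idem (j * g * sinv j) := by
  unfold idem at *
  calc j * g * sinv j * (j * g * sinv j) = j * ((sinv j * j) * g * g) * sinv j := by
        rw [← idem_comm g (sinv j * j) hg (idem_sinv_mul_self j)]; simp only [mul_assoc]
    _ = j * g * sinv j := by
        rw [mul_assoc (sinv j * j) g g, hg, ← mul_assoc, ← mul_assoc, mul_sinv_mul]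

theorem eq_sinv_of_mul_mul_eq {a x : S} (h₁ : a * x * a = a) (h₂ : x * a * x = x) :
    x = sinv a := by
  have comm_left := idem_comm (a * sinv a) (a * x)
    (idem_mul_sinv_self a) (idem_mul_of_mul_mul_eq h₁)
  have comm_right := idem_comm (sinv a * a) (x * a)
    (idem_sinv_mul_self a) (idem_mul_of_mul_mul_eq' h₁)
  calc x = x * (a * sinv a * a) * x := by rw [mul_sinv_mul, h₂]
    _ = x * ((a * x) * (a * sinv a)) := by rw [← comm_left]; simp only [mul_assoc]
    _ = x * a * sinv a := by simp only [← mul_assoc, h₂]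
    _ = (x * a) * (sinv a * a) * sinv a := by rw [mul_assoc (x * a), sinv_mul_sinv]
    _ = sinv a * (a * x * a) * sinv a := by rw [← comm_right]; simp only [mul_assoc]
    _ = sinv a := by rw [h₁, sinv_mul_sinv]

theorem sinv_mul_rev (a b : S) : sinv (a * b) = sinv b * sinv a := by
  have comm := idem_comm (b * sinv b) (sinv a * a) (idem_mul_sinv_self b) (idem_sinv_mul_self a)
  refine (eq_sinv_of_mul_mul_eq ?_ ?_).symm
  · calc a * b * (sinv b * sinv a) * (a * b) = a * ((b * sinv b) * (sinv a * a)) * b := by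
          simp only [mul_assoc]
      _ = (a * sinv a * a) * (b * sinv b * b) := by rw [comm]; simp only [mul_assoc]
      _ = a * b := by rw [mul_sinv_mul, mul_sinv_mul]
  · calc sinv b * sinv a * (a * b) * (sinv b * sinv a)
          = sinv b * ((b * sinv b) * (sinv a * a)) * sinv a := by
          rw [comm]; simp only [mul_assoc]
      _ = (sinv b * b * sinv b) * (sinv a * a * sinv a) := by simp only [mul_assoc]
      _ = sinv b * sinv a := by rw [sinv_mul_sinv, sinv_mul_sinv]

theorem sinv_eq_self_of_idem {e : S} (he : idem e) : sinv e = e :=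
  (eq_sinv_of_mul_mul_eq (by rw [he, he]) (by rw [he, he])).symm

theorem nle_refl (a : S) : nle a a :=
  ⟨sinv a * a, idem_sinv_mul_self a, by rw [← mul_assoc, mul_sinv_mul]⟩

theorem nle_trans {a b c : S} (hab : nle a b) (hbc : nle b c) : nle a c := by
  obtain ⟨e, he, rfl⟩ := hab
  obtain ⟨f, hf, rfl⟩ := hbc
  exact ⟨f * e, idem_mul hf he, mul_assoc c f e⟩

theorem nle_mul_idem (a : S) {e : S} (he : idem e) : nle (a * e) a := ⟨e, he, rfl⟩

theorem mul_idem_nle_mul_idem {a b e : S} (hab : nle a b) (he : idem e) :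
    nle (a * e) (b * e) := by
  obtain ⟨f, hf, rfl⟩ := hab
  exact ⟨f, hf, by rw [mul_assoc, idem_comm f e hf he, ← mul_assoc]⟩

theorem eq_mul_sinv_mul_self_of_nle {a b : S} (hab : nle a b) : a = b * (sinv a * a) := by
  obtain ⟨e, he, rfl⟩ := hab
  have hfix : b * e * e = b * e := by rw [mul_assoc, he]
  calc b * e = b * e * (sinv (b * e) * (b * e)) := by rw [← mul_assoc, mul_sinv_mul]
    _ = b * (sinv (b * e) * (b * e) * e) := by
        rw [idem_comm _ e (idem_sinv_mul_self _) he]; simp only [mul_assoc]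
    _ = b * (sinv (b * e) * (b * e)) := by rw [mul_assoc (sinv (b * e)), hfix]

theorem sinv_mul_self_eq_of_nle {a b : S} (hab : nle a b) :
    sinv a * a = sinv b * b * (sinv a * a) := by
  calc sinv a * a = sinv (b * (sinv a * a)) * (b * (sinv a * a)) := by
        rw [← eq_mul_sinv_mul_self_of_nle hab]
    _ = sinv a * a * (sinv b * b) * (sinv a * a) := by
        rw [sinv_mul_rev, sinv_eq_self_of_idem (idem_sinv_mul_self a)]; simp only [mul_assoc]
    _ = sinv b * b * (sinv a * a) := by
        rw [idem_comm _ _ (idem_sinv_mul_self a) (idem_sinv_mul_self b), mul_assoc,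
          idem_sinv_mul_self a]

theorem mul_sinv_mul_self_nle_of_nle (x : S) {a b : S} (hab : nle a b) :
    nle (x * (sinv a * a)) (x * (sinv b * b)) :=
  ⟨_, idem_sinv_mul_self a, by rw [mul_assoc, ← sinv_mul_self_eq_of_nle hab]⟩

theorem compatible_of_nle_of_nle {a b j : S} (ha : nle a j) (hb : nle b j) :
    compatible a b := by
  obtain ⟨e, he, rfl⟩ := ha
  obtain ⟨f, hf, rfl⟩ := hb
  constructor
  · rw [sinv_mul_rev, sinv_eq_self_of_idem he]
    have h := idem_mul (idem_mul he (idem_sinv_mul_self j)) hf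
    simpa only [mul_assoc] using h
  · rw [sinv_mul_rev, sinv_eq_self_of_idem hf]
    have h := idem_mul_mul_sinv j (idem_mul he hf)
    simpa only [mul_assoc] using h

end InverseSemigroup

section WithZero
variable [InverseSemigroupWithZero S]

theorem eq_zero_of_nle_zero {a : S} (h : nle a 0) : a = 0 := by
  obtain ⟨e, _, rfl⟩ := h
  exact InverseSemigroupWithZero.zmul e

theorem mul_sinv_mul_self_eq_zero_of_nle {x f h : S} (hhf : nle h f)
    (hx : x * (sinv f * f) = 0) : x * (sinv h * h) = 0 :=
  eq_zero_of_nle_zero (hx ▸ mul_sinv_mul_self_nle_of_nle x hhf)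

def mulDomClosure (x : S) (F : Set S) : Set S :=
  {y | ∃ f ∈ F, nle (x * (sinv f * f)) y}

theorem IsFilter.mulDomClosure {F : Set S} (hF : IsFilter F) (x : S) :
    IsFilter (mulDomClosure x F) := by
  obtain ⟨⟨f₀, hf₀⟩, hdir, -⟩ := hF
  refine ⟨⟨_, f₀, hf₀, nle_refl _⟩, ?_, ?_⟩
  · rintro y ⟨f, hf, hfy⟩ z ⟨g, hg, hgz⟩
    obtain ⟨h, hh, hhf, hhg⟩ := hdir f hf g hg
    exact ⟨x * (sinv h * h), ⟨h, hh, nle_refl _⟩,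
      nle_trans (mul_sinv_mul_self_nle_of_nle x hhf) hfy,
      nle_trans (mul_sinv_mul_self_nle_of_nle x hhg) hgz⟩
  · rintro y ⟨f, hf, hfy⟩ z hyz
    exact ⟨f, hf, nle_trans hfy hyz⟩

theorem mem_mulDomClosure_self {F : Set S} (hF : F.Nonempty) (x : S) :
    x ∈ mulDomClosure x F := by
  obtain ⟨f, hf⟩ := hF
  exact ⟨f, hf, nle_mul_idem x (idem_sinv_mul_self f)⟩

theorem subset_mulDomClosure {F : Set S} (hF : IsFilter F) {x j : S} (hj : j ∈ F)
    (hxj : nle x j) : F ⊆ mulDomClosure x F := by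
  intro g hg
  obtain ⟨h, hh, hhg, hhj⟩ := hF.2.1 g hg j hj
  refine ⟨h, hh, nle_trans ?_ hhg⟩
  have := mul_idem_nle_mul_idem hxj (idem_sinv_mul_self h)
  rwa [← eq_mul_sinv_mul_self_of_nle hhj] at this

theorem IsUltrafilter.exists_mul_sinv_mul_self_eq_zero {F : Set S} (hF : IsUltrafilter F)
    {x j : S} (hj : j ∈ F) (hxj : nle x j) (hx : x ∉ F) :
    ∃ f ∈ F, x * (sinv f * f) = 0 := by
  obtain ⟨⟨hFilter, -⟩, hmax⟩ := hF
  by_contra! hne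
  have hproper : IsProperFilter (mulDomClosure x F) :=
    ⟨hFilter.mulDomClosure x, fun ⟨f, hf, hf0⟩ => hne f hf (eq_zero_of_nle_zero hf0)⟩
  have hEq := hmax _ hproper (subset_mulDomClosure hFilter hj hxj)
  exact hx (hEq ▸ mem_mulDomClosure_self hFilter.1 x)

end WithZero

theorem isJoin_mul_eq_zero [DistributiveInverseSemigroup S] {a b j c : S}
    (hj : isJoin a b j) (ha : a * c = 0) (hb : b * c = 0) : j * c = 0 := by
  have hjc := DistributiveInverseSemigroup.mul_distrib_right a b j c
    (compatible_of_nle_of_nle hj.1 hj.2.1) hj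
  rw [ha, hb] at hjc
  exact eq_zero_of_nle_zero (hjc.2.2 0 (nle_refl 0) (nle_refl 0))

/-- In a distributive inverse semigroup, every ultrafilter is a prime filter. -/
theorem stmt7 {S : Type*} [DistributiveInverseSemigroup S] (F : Set S)
    (hF : IsUltrafilter F) : IsPrimeFilter F := by
  refine ⟨hF.1, fun a b j hj hjF => ?_⟩
  have hdir := hF.1.1.2.1
  by_contra! hab
  obtain ⟨f, hf, haf⟩ := hF.exists_mul_sinv_mul_self_eq_zero hjF hj.1 hab.1
  obtain ⟨g, hg, hbg⟩ := hF.exists_mul_sinv_mul_self_eq_zero hjF hj.2.1 hab.2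
  obtain ⟨k, hk, hkf, hkg⟩ := hdir f hf g hg
  obtain ⟨h, hh, hhk, hhj⟩ := hdir k hk j hjF
  have hjh : j * (sinv h * h) = 0 := isJoin_mul_eq_zero hj
    (mul_sinv_mul_self_eq_zero_of_nle (nle_trans hhk hkf) haf)
    (mul_sinv_mul_self_eq_zero_of_nle (nle_trans hhk hkg) hbg)
  exact hF.1.2 (by rwa [eq_mul_sinv_mul_self_of_nle hhj, hjh] at hh)

end InvPaper
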